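/- arXiv:2506.12446 — 4 statements merged into one kernel-verified Lean document; each statement's English description precedes it below -/
import Mathlib

section
/- Under score consistency, token-level greedy reward-guided search recovers the optimal response: define ŷ inductively by ŷ_t = argmax_{v ∈ V} r(x, ŷ_{<t} ++ [v]). If y* uniquely maximizes r(x,·) among length-T responses and r satisfies score consistency with strict inequalities preserved (r(x,y¹) > r(x,y²) → r(x,y¹_{<t}) > r(x,y²_{<t}) whenever the prefixes differ), then ŷ = y*. -/
/-!
Suppose greedy search produced `ŷ ≠ y*`. Then `r y* > r ŷ`, so by strict consistency at every
length `t` where the prefixes differ, the prefix of `y*` scores strictly higher than that of `ŷ`.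
At the first length `t + 1` where they differ, the prefix of `y*` is the common prefix of length
`t` extended by one token, a candidate that the greedy step at `t` already beat or tied:
contradiction. Hence all prefixes agree, in particular the full responses.
-/

theorem take_succ_eq_of_greedy_step {V : Type*} (r : List V → ℝ) {yhat ystar : List V} {t : ℕ}
    (ht : t < ystar.length) (hprefix : yhat.take t = ystar.take t)
    (hgreedy : ∀ v : V, r (yhat.take (t + 1)) ≥ r (yhat.take t ++ [v]))
    (hstrict : yhat.take (t + 1) ≠ ystar.take (t + 1) →
      r (ystar.take (t + 1)) > r (yhat.take (t + 1))) :
    yhat.take (t + 1) = ystar.take (t + 1) := by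
  by_contra hne
  have hext : ystar.take (t + 1) = yhat.take t ++ [ystar[t]] := by
    rw [hprefix, List.take_succ_eq_append_getElem ht]
  have := hgreedy ystar[t]
  rw [← hext] at this
  exact (hstrict hne).not_ge this

theorem stmt_1_general {V : Type*} (T : ℕ)
    (r : List V → ℝ)
    (ystar : List V) (hstarlen : ystar.length = T)
    (huniq : ∀ y : List V, y.length = T → y ≠ ystar → r ystar > r y)
    (hssc : ∀ y1 y2 : List V, y1.length = T → y2.length = T → ∀ t ≤ T,
      r y1 > r y2 → y1.take t ≠ y2.take t → r (y1.take t) > r (y2.take t))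
    (yhat : List V) (hhatlen : yhat.length = T)
    (hgreedy : ∀ t < T, ∀ v : V, r (yhat.take (t + 1)) ≥ r (yhat.take t ++ [v])) :
    yhat = ystar := by
  by_contra hne
  have hbetter : r ystar > r yhat := huniq yhat hhatlen hne
  have hprefix : ∀ t ≤ T, yhat.take t = ystar.take t := by
    intro t
    induction t with
    | zero => simp
    | succ t ih =>
      intro ht
      exact take_succ_eq_of_greedy_step r (by omega) (ih (by omega)) (hgreedy t ht)
        fun hdiff => hssc ystar yhat hstarlen hhatlen (t + 1) ht hbetter (Ne.symm hdiff)
  apply hne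
  simpa [List.take_of_length_le, hhatlen, hstarlen] using hprefix T le_rfl

/-- under strict score consistency, token-level greedy
reward-guided search recovers the unique optimal response. -/
theorem stmt_1 {V : Type*} [Fintype V] [Nonempty V] (T : ℕ) (hT : 0 < T)
    (r : List V → ℝ)
    (ystar : List V) (hstarlen : ystar.length = T)
    (huniq : ∀ y : List V, y.length = T → y ≠ ystar → r ystar > r y)
    (hssc : ∀ y1 y2 : List V, y1.length = T → y2.length = T → ∀ t ≤ T,
      r y1 > r y2 → y1.take t ≠ y2.take t → r (y1.take t) > r (y2.take t))
    (yhat : List V) (hhatlen : yhat.length = T)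
    (hgreedy : ∀ t < T, ∀ v : V, r (yhat.take (t + 1)) ≥ r (yhat.take t ++ [v])) :
    yhat = ystar :=
  stmt_1_general T r ystar hstarlen huniq hssc yhat hhatlen hgreedy
end

section
/- Under score consistency, chunk-level greedy reward-guided search with chunk length L recovers the optimal response: if T = M·L and at each step k the search appends the chunk C ∈ V^L maximizing r(x, P_{k-1} ++ C) where P_{k-1} is the prefix already built, then assuming the optimal response y* uniquely maximizes r among length-T responses and r satisfies strict score consistency on differing prefixes, the search outputs y*. -/
/-!
Induction on the number of chunks: if the greedy prefix of length `k * L` agrees with `y*`, then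
greediness makes the next greedy prefix score at least as well as the prefix of `y*` of the same
length. Were the two prefixes different, `y*` beating the full greedy response would, by strict
score consistency, make the prefix of `y*` score strictly better. So the prefixes agree all the
way to length `M * L = T`.
-/

theorem List.take_add_eq_append_ofFn {α : Type*} (y : List α) {n L : ℕ}
    (h : n + L ≤ y.length) :
    y.take (n + L) = y.take n ++ List.ofFn (fun i : Fin L => y[n + i]) := by
  rw [List.take_add]
  congr 1
  apply List.ext_getElem
  · simp only [List.length_take, List.length_drop, List.length_ofFn]
    omega
  · intro i _ hi
    simp

section

variable {V : Type*}

def StrictlyScoreConsistent (r : List V → ℝ) (T : ℕ) : Prop :=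
  ∀ y1 y2 : List V, y1.length = T → y2.length = T → ∀ t ≤ T,
    r y1 > r y2 → y1.take t ≠ y2.take t → r (y1.take t) > r (y2.take t)

variable {r : List V → ℝ} {T : ℕ} {ystar yhat : List V}

theorem take_eq_of_score_take_le (hssc : StrictlyScoreConsistent r T)
    (hstarlen : ystar.length = T) (hhatlen : yhat.length = T)
    (huniq : ∀ y : List V, y.length = T → y ≠ ystar → r ystar > r y)
    {t : ℕ} (ht : t ≤ T) (hle : r (ystar.take t) ≤ r (yhat.take t)) :
    yhat.take t = ystar.take t := by
  by_contra hne
  have hbeat : r ystar > r yhat := huniq yhat hhatlen fun h => hne (h ▸ rfl)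
  exact (hssc ystar yhat hstarlen hhatlen t ht hbeat (Ne.symm hne)).not_ge hle

theorem greedy_take_eq (hssc : StrictlyScoreConsistent r T)
    (hstarlen : ystar.length = T) (hhatlen : yhat.length = T)
    (huniq : ∀ y : List V, y.length = T → y ≠ ystar → r ystar > r y)
    {L M : ℕ} (hT : T = M * L)
    (hgreedy : ∀ k < M, ∀ C : Fin L → V,
      r (yhat.take ((k + 1) * L)) ≥ r (yhat.take (k * L) ++ List.ofFn C)) :
    ∀ k ≤ M, yhat.take (k * L) = ystar.take (k * L) := by
  intro k
  induction k with
  | zero => simp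
  | succ k ih =>
    intro hk
    have hlen : (k + 1) * L ≤ T := hT ▸ Nat.mul_le_mul_right L hk
    have hfits : k * L + L ≤ ystar.length := by rw [hstarlen, ← Nat.succ_mul]; exact hlen
    have hchunk := ystar.take_add_eq_append_ofFn hfits
    rw [← Nat.succ_mul] at hchunk
    refine take_eq_of_score_take_le hssc hstarlen hhatlen huniq hlen ?_
    rw [hchunk, ← ih (Nat.le_of_succ_le hk)]
    exact hgreedy k hk _

end

theorem stmt_2_general {V : Type*} (L M : ℕ) (T : ℕ) (hT : T = M * L) (r : List V → ℝ)
    (ystar : List V) (hstarlen : ystar.length = T)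
    (huniq : ∀ y : List V, y.length = T → y ≠ ystar → r ystar > r y)
    (hssc : ∀ y1 y2 : List V, y1.length = T → y2.length = T → ∀ t ≤ T,
      r y1 > r y2 → y1.take t ≠ y2.take t → r (y1.take t) > r (y2.take t))
    (yhat : List V) (hhatlen : yhat.length = T)
    (hgreedy : ∀ k < M, ∀ C : Fin L → V,
      r (yhat.take ((k + 1) * L)) ≥ r (yhat.take (k * L) ++ List.ofFn C)) :
    yhat = ystar := by
  have hprefix := greedy_take_eq hssc hstarlen hhatlen huniq hT hgreedy M le_rfl
  rwa [← hT, List.take_of_length_le hhatlen.le, List.take_of_length_le hstarlen.le] at hprefix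

/-- under strict score consistency, chunk-level greedy
reward-guided search with chunk length L recovers the unique optimal response. -/
theorem stmt_2 {V : Type*} [Fintype V] [Nonempty V] (L M : ℕ) (hL : 0 < L)
    (hM : 0 < M) (T : ℕ) (hT : T = M * L) (r : List V → ℝ)
    (ystar : List V) (hstarlen : ystar.length = T)
    (huniq : ∀ y : List V, y.length = T → y ≠ ystar → r ystar > r y)
    (hssc : ∀ y1 y2 : List V, y1.length = T → y2.length = T → ∀ t ≤ T,
      r y1 > r y2 → y1.take t ≠ y2.take t → r (y1.take t) > r (y2.take t))
    (yhat : List V) (hhatlen : yhat.length = T)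
    (hgreedy : ∀ k < M, ∀ C : Fin L → V,
      r (yhat.take ((k + 1) * L)) ≥ r (yhat.take (k * L) ++ List.ofFn C)) :
    yhat = ystar :=
  stmt_2_general L M T hT r ystar hstarlen huniq hssc yhat hhatlen hgreedy
end

section
/- If a reward model r satisfies score consistency and y* maximizes r among all length-T responses starting with a fixed prefix p of length t-1, then for every token v, r(x, p ++ [y*_t]) ≥ r(x, p ++ [v]) where y*_t is the t-th token of y*. -/
/-! The competitor `y*` with its `t`-th token replaced by `v` is a length-`T` response extending
`p`, so it scores at most `r y*`; score consistency transfers this comparison to the length-`t`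
prefixes, which are `p ++ [y*_t]` and `p ++ [v]`. -/

theorem List.take_succ_set_self {α : Type*} {l : List α} {i : ℕ} (h : i < l.length) (a : α) :
    (l.set i a).take (i + 1) = l.take i ++ [a] := by
  rw [List.take_succ_eq_append_getElem (by simpa using h), List.take_set_of_le le_rfl,
    List.getElem_set_self]

theorem stmt_3_general {V : Type*} (T : ℕ) (r : List V → ℝ)
    (p : List V)
    (ystar : List V) (hstarlen : ystar.length = T)
    (hstarext : ystar.take p.length = p)
    (hplt : p.length < ystar.length)
    (hopt : ∀ y : List V, y.length = T → y.take p.length = p → r ystar ≥ r y)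
    (hsc : ∀ y1 y2 : List V, y1.length = T → y2.length = T → ∀ s ≤ T,
      r y1 ≥ r y2 → r (y1.take s) ≥ r (y2.take s)) :
    ∀ v : V, r (p ++ [ystar.get ⟨p.length, hplt⟩]) ≥ r (p ++ [v]) := by
  intro v
  set y := ystar.set p.length v
  have hy_len : y.length = T := by rw [List.length_set, hstarlen]
  have hy_ext : y.take p.length = p := by rw [List.take_set_of_le le_rfl, hstarext]
  have h := hsc ystar y hstarlen hy_len (p.length + 1) (hstarlen ▸ hplt) (hopt y hy_len hy_ext)
  rwa [List.take_succ_set_self hplt, List.take_succ_eq_append_getElem hplt, hstarext] at h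

/-- if y* maximizes r among length-T responses extending a fixed
prefix p, then under score consistency the one-token extension of p by the next
token of y* scores at least the extension by any other token. -/
theorem stmt_3 {V : Type*} [Fintype V] [Nonempty V] (T : ℕ) (r : List V → ℝ)
    (p : List V) (hpT : p.length + 1 ≤ T)
    (ystar : List V) (hstarlen : ystar.length = T)
    (hstarext : ystar.take p.length = p)
    (hplt : p.length < ystar.length)
    (hopt : ∀ y : List V, y.length = T → y.take p.length = p → r ystar ≥ r y)
    (hsc : ∀ y1 y2 : List V, y1.length = T → y2.length = T → ∀ s ≤ T,
      r y1 ≥ r y2 → r (y1.take s) ≥ r (y2.take s)) :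
    ∀ v : V, r (p ++ [ystar.get ⟨p.length, hplt⟩]) ≥ r (p ++ [v]) :=
  stmt_3_general T r p ystar hstarlen hstarext hplt hopt hsc
end

section
/- If a reward model satisfies score consistency, then beam search with any beam width W ≥ 1 over tokens, applied to candidates that include the optimal next token at each step, never prunes all prefixes of a globally optimal length-T response y*, and hence the final beam contains y*. -/
/-!
Score consistency turns global optimality of `y*` into prefix optimality: any other prefix `s`
of length `t` extends to the length-`T` response `s ++ y*.drop t`, which loses to `y*`, so `s`
loses to `y*.take t`. Hence, if `y*.take t` survives step `t` but its extension `y*.take (t + 1)`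
were pruned, every survivor of step `t + 1` would have to outscore it, which no other prefix of
that length does.
-/

theorem length_eq_of_mem_beam {V : Type*} {H : ℕ → Finset (List V)}
    (hH0 : H 0 = {[]}) (hext : ∀ t, ∀ s ∈ H (t + 1), ∃ p ∈ H t, ∃ v : V, s = p ++ [v]) :
    ∀ t, ∀ s ∈ H t, s.length = t
  | 0, s, hs => by simp_all
  | t + 1, s, hs => by
    obtain ⟨p, hp, v, rfl⟩ := hext t s hs
    simp [length_eq_of_mem_beam hH0 hext t p hp]

theorem score_lt_take_of_ne {V : Type*} {T : ℕ} {r : List V → ℝ}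
    (hssc : ∀ y1 y2 : List V, y1.length = T → y2.length = T → ∀ t ≤ T,
      r y1 > r y2 → y1.take t ≠ y2.take t → r (y1.take t) > r (y2.take t))
    {ystar : List V} (hstarlen : ystar.length = T)
    (huniq : ∀ y : List V, y.length = T → y ≠ ystar → r ystar > r y)
    {t : ℕ} (ht : t ≤ T) {s : List V} (hslen : s.length = t) (hs : s ≠ ystar.take t) :
    r s < r (ystar.take t) := by
  set z := s ++ ystar.drop t
  have hzlen : z.length = T := by simp [z, hslen, hstarlen]; omega
  have hztake : z.take t = s := List.take_left' hslen
  have hzne : z ≠ ystar := by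
    rintro hz
    exact hs (hz ▸ hztake).symm
  have := hssc ystar z hstarlen hzlen t ht (huniq z hzlen hzne) (hztake ▸ hs.symm)
  rwa [hztake] at this

theorem stmt_13_general {V : Type*} (T : ℕ)
    (r : List V → ℝ)
    (hssc : ∀ y1 y2 : List V, y1.length = T → y2.length = T → ∀ t ≤ T,
      r y1 > r y2 → y1.take t ≠ y2.take t → r (y1.take t) > r (y2.take t))
    (ystar : List V) (hstarlen : ystar.length = T)
    (huniq : ∀ y : List V, y.length = T → y ≠ ystar → r ystar > r y)
    (H : ℕ → Finset (List V))
    (hH0 : H 0 = {([] : List V)})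
    (hne : ∀ t ≤ T, (H t).Nonempty)
    (hext : ∀ t, ∀ s ∈ H (t + 1), ∃ p ∈ H t, ∃ v : V, s = p ++ [v])
    (htop : ∀ t, ∀ p ∈ H t, ∀ v : V,
      (p ++ [v]) ∉ H (t + 1) → ∀ s ∈ H (t + 1), r s ≥ r (p ++ [v])) :
    (∀ t ≤ T, ystar.take t ∈ H t) ∧ ystar ∈ H T := by
  have hprefix : ∀ t ≤ T, ystar.take t ∈ H t := by
    intro t
    induction t with
    | zero => simp [hH0]
    | succ t ih =>
      intro ht
      have hsucc := List.take_succ_eq_append_getElem (l := ystar) (i := t) (by omega)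
      by_contra hpruned
      obtain ⟨s, hs⟩ := hne (t + 1) ht
      have hs_ne : s ≠ ystar.take (t + 1) := fun h => hpruned (h ▸ hs)
      have hlt := score_lt_take_of_ne hssc hstarlen huniq ht
        (length_eq_of_mem_beam hH0 hext (t + 1) s hs) hs_ne
      have hge := htop t _ (ih (by omega)) _ (hsucc ▸ hpruned) s hs
      rw [← hsucc] at hge
      linarith
  refine ⟨hprefix, ?_⟩
  simpa [List.take_of_length_le hstarlen.le] using hprefix T le_rfl

/-- under strict score consistency, token-level beam search with
beam width W ≥ 1 never prunes the prefixes of the unique globally optimal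
length-T response y*, so the final beam contains y*. -/
theorem stmt_13 {V : Type*} [Fintype V] [Nonempty V] (T W : ℕ) (hW : 1 ≤ W)
    (r : List V → ℝ)
    (hssc : ∀ y1 y2 : List V, y1.length = T → y2.length = T → ∀ t ≤ T,
      r y1 > r y2 → y1.take t ≠ y2.take t → r (y1.take t) > r (y2.take t))
    (ystar : List V) (hstarlen : ystar.length = T)
    (huniq : ∀ y : List V, y.length = T → y ≠ ystar → r ystar > r y)
    (H : ℕ → Finset (List V))
    (hH0 : H 0 = {([] : List V)})
    (hcard : ∀ t, (H t).card ≤ W)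
    (hne : ∀ t ≤ T, (H t).Nonempty)
    (hext : ∀ t, ∀ s ∈ H (t + 1), ∃ p ∈ H t, ∃ v : V, s = p ++ [v])
    (htop : ∀ t, ∀ p ∈ H t, ∀ v : V,
      (p ++ [v]) ∉ H (t + 1) → ∀ s ∈ H (t + 1), r s ≥ r (p ++ [v])) :
    (∀ t ≤ T, ystar.take t ∈ H t) ∧ ystar ∈ H T :=
  stmt_13_general T r hssc ystar hstarlen huniq H hH0 hne hext htop
end
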